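/- arXiv:1409.0224 — 8 statements merged into one kernel-verified Lean document; each statement's English description precedes it below -/
import Mathlib

section
/- Let B be a Boolean algebra, M a finite De Morgan algebra, and x : M → B a partition of unity (x_p · x_q = 0 for p ≠ q, Σ_p x_p = 1). Let c be a cylindrification on B (a unary operation with c0=0, a ≤ ca, c(a·cb)=ca·cb), and define for each p ∈ M the element (Cx)_p = Σ_{A⊆M nonempty, sup A = p} Π_{q∈A} c(x_q) · −Σ_{A⊆M nonempty, sup A > p} Π_{q∈A} c(x_q). Then (Cx)_p · (Cx)_q = 0 whenever p ≠ q. -/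
attribute [local instance] Classical.propDecidable

/-- A De Morgan algebra: a bounded distributive lattice with an involutive
negation satisfying De Morgan's laws. -/
class DeMorganAlgebra (M : Type*) extends DistribLattice M, BoundedOrder M where
  dneg : M → M
  dneg_sup : ∀ x y : M, dneg (x ⊔ y) = dneg x ⊓ dneg y
  dneg_inf : ∀ x y : M, dneg (x ⊓ y) = dneg x ⊔ dneg y
  dneg_dneg : ∀ x : M, dneg (dneg x) = x

/-- The cylindrification of a partition of unity:
`(Cx)_p = Σ_{A nonempty, sup A = p} Π_{q∈A} c(x_q) · −Σ_{A nonempty, sup A > p} Π_{q∈A} c(x_q)`. -/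
noncomputable def cylPart {M B : Type*} [Fintype M] [DeMorganAlgebra M] [BooleanAlgebra B]
    (c : B → B) (x : M → B) (p : M) : B :=
  ((Finset.univ.powerset.filter fun A : Finset M => A.Nonempty ∧ A.sup id = p).sup
      fun A => A.inf fun q => c (x q)) ⊓
    ((Finset.univ.powerset.filter fun A : Finset M => A.Nonempty ∧ p < A.sup id).sup
      fun A => A.inf fun q => c (x q))ᶜ

theorem cylPart_key {M B : Type*} [Fintype M] [DeMorganAlgebra M] [BooleanAlgebra B]
    (c : B → B) (x : M → B) (p q : M) (hlt : p < p ⊔ q) :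
    cylPart c x p ⊓ cylPart c x q = ⊥ := by
  set f : Finset M → B := fun A => A.inf fun r => c (x r) with hf
  set S : M → B := fun r =>
    (Finset.univ.powerset.filter fun A : Finset M => A.Nonempty ∧ A.sup id = r).sup f with hS
  set T : M → B := fun r =>
    (Finset.univ.powerset.filter fun A : Finset M => A.Nonempty ∧ r < A.sup id).sup f with hT
  have hST : S p ⊓ S q ≤ T p := by
    rw [hS]
    simp only [Finset.sup_inf_distrib_right, Finset.sup_inf_distrib_left]
    apply Finset.sup_le
    intro A hA
    apply Finset.sup_le
    intro A' hA'
    simp only [Finset.mem_filter, Finset.mem_powerset] at hA hA'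
    have hunion : f A' ⊓ f A = f (A' ∪ A) := by
      rw [hf]; exact (Finset.inf_union).symm
    rw [hunion]
    apply Finset.le_sup
    simp only [Finset.mem_filter, Finset.mem_powerset]
    refine ⟨Finset.subset_univ _, ⟨hA'.2.1.mono Finset.subset_union_left, ?_⟩⟩
    rw [Finset.sup_union, hA'.2.2, hA.2.2]
    exact hlt
  refine le_bot_iff.mp ?_
  calc cylPart c x p ⊓ cylPart c x q
      ≤ (S p ⊓ S q) ⊓ (T p)ᶜ := by
        show S p ⊓ (T p)ᶜ ⊓ (S q ⊓ (T q)ᶜ) ≤ S p ⊓ S q ⊓ (T p)ᶜ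
        refine le_inf (le_inf ?_ ?_) ?_
        · exact le_trans inf_le_left inf_le_left
        · exact le_trans inf_le_right inf_le_left
        · exact le_trans inf_le_left inf_le_right
    _ ≤ T p ⊓ (T p)ᶜ := inf_le_inf_right _ hST
    _ ≤ ⊥ := le_of_eq inf_compl_eq_bot

/-- The cylindrified family has pairwise disjoint components. -/
theorem stmt_5 {M B : Type*} [Fintype M] [DeMorganAlgebra M] [BooleanAlgebra B]
    (c : B → B) (hc0 : c ⊥ = ⊥) (hc1 : ∀ a : B, a ≤ c a)
    (hc2 : ∀ a b : B, c (a ⊓ c b) = c a ⊓ c b)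
    (x : M → B)
    (hx1 : ∀ p q : M, p ≠ q → x p ⊓ x q = ⊥) (hx2 : Finset.univ.sup x = ⊤) :
    ∀ p q : M, p ≠ q → cylPart c x p ⊓ cylPart c x q = ⊥ := by
  intro p q hpq
  by_cases h : p < p ⊔ q
  · exact cylPart_key c x p q h
  · have hp : p ⊔ q = p := by
      by_contra hne
      exact h (lt_of_le_of_ne le_sup_left (fun he => hne he.symm))
    have hq : q < q ⊔ p := by
      rw [sup_comm, hp]
      exact lt_of_le_of_ne (hp ▸ le_sup_right) (Ne.symm hpq)
    rw [inf_comm]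
    exact cylPart_key c x q p hq
end

section
/- Let B be a Boolean algebra with cylindrification c, M a finite De Morgan algebra, and x : M → B a partition of unity. With (Cx)_p defined as Σ_{sup A = p} Π_{q∈A} c(x_q) · −Σ_{sup A > p} Π_{q∈A} c(x_q) (sums over nonempty A ⊆ M), we have Σ_{p∈M} (Cx)_p = 1. -/
attribute [local instance] Classical.propDecidable

/-- The cylindrified family of a partition of unity sums to 1. -/
theorem stmt_6 {M B : Type*} [Fintype M] [DeMorganAlgebra M] [BooleanAlgebra B]
    (c : B → B) (hc0 : c ⊥ = ⊥) (hc1 : ∀ a : B, a ≤ c a)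
    (hc2 : ∀ a b : B, c (a ⊓ c b) = c a ⊓ c b)
    (x : M → B)
    (hx1 : ∀ p q : M, p ≠ q → x p ⊓ x q = ⊥) (hx2 : Finset.univ.sup x = ⊤) :
    Finset.univ.sup (cylPart c x) = ⊤ := by
  classical
  set f : Finset M → B := fun A => A.inf fun q => c (x q) with hf
  set G : M → B := fun p =>
    (Finset.univ.powerset.filter fun A : Finset M => A.Nonempty ∧ A.sup id = p).sup f with hG
  set H : M → B := fun p =>
    (Finset.univ.powerset.filter fun A : Finset M => A.Nonempty ∧ p < A.sup id).sup f with hH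
  have hcyl : ∀ p, cylPart c x p = G p ⊓ (H p)ᶜ := fun p => rfl
  set S : B := Finset.univ.sup (cylPart c x) with hS
  -- Step 2: H p ≤ sup of G over r > p
  have step2 : ∀ p : M, H p ≤ (Finset.univ.filter fun r => p < r).sup G := by
    intro p
    apply Finset.sup_le
    intro A hA
    simp only [Finset.mem_filter] at hA
    obtain ⟨-, hne, hlt⟩ := hA
    have h1 : f A ≤ G (A.sup id) := by
      apply Finset.le_sup
      simp only [Finset.mem_filter, Finset.mem_powerset]
      exact ⟨Finset.subset_univ _, hne, trivial⟩
    refine h1.trans (Finset.le_sup ?_)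
    simp [hlt]
  -- Step 3: downward induction
  have wf : WellFounded ((· > ·) : M → M → Prop) := wellFounded_gt
  have key : ∀ p : M, G p ≤ S := by
    intro p
    refine wf.induction (C := fun p => G p ≤ S) p ?_
    intro p ih
    have h1 : G p = (G p ⊓ (H p)ᶜ) ⊔ (G p ⊓ H p) := by
      rw [← inf_sup_left, compl_sup_eq_top, inf_top_eq]
    have h2 : G p ⊓ (H p)ᶜ ≤ S := by
      rw [← hcyl]
      exact Finset.le_sup (Finset.mem_univ p)
    have h3 : H p ≤ S := by
      refine (step2 p).trans (Finset.sup_le ?_)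
      intro r hr
      simp only [Finset.mem_filter] at hr
      exact ih r hr.2
    rw [h1]
    exact sup_le h2 (inf_le_right.trans h3)
  -- conclusion
  have hx : ∀ p : M, x p ≤ S := by
    intro p
    have h1 : x p ≤ f {p} := by
      simp only [hf, Finset.inf_singleton]
      exact hc1 (x p)
    have h2 : f {p} ≤ G p := by
      apply Finset.le_sup
      simp only [Finset.mem_filter, Finset.mem_powerset]
      exact ⟨Finset.subset_univ _, Finset.singleton_nonempty p, by simp⟩
    exact (h1.trans h2).trans (key p)
  have : (⊤ : B) ≤ S := hx2 ▸ Finset.sup_le fun p _ => hx p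
  exact le_antisymm le_top this
end

section
/- Let B be a Boolean algebra, M a finite De Morgan algebra, U, W : M → B with Σ_q W_q = 1 and W_q · W_r = 0 for q ≠ r. Define V : M → B by V_r = Σ_{sup A = r} Π_{q∈A} U_q · −Σ_{sup A > r} Π_{q∈A} U_q (sums over nonempty A ⊆ M). Then for all p ∈ M: Σ_{sup A = p} Π_{q∈A} Σ_{r·t=q} (U_r · W_t) · −Σ_{sup A > p} Π_{q∈A} Σ_{r·t=q} (U_r · W_t) = Σ_{r·t=p} (V_r · W_t), where r·t denotes the meet in M. -/
attribute [local instance] Classical.propDecidable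

/-- `layerOp U r = Σ_{sup A = r} Π_{q∈A} U_q · −Σ_{sup A > r} Π_{q∈A} U_q`
(sums over nonempty `A ⊆ M`). -/
noncomputable def layerOp {M B : Type*} [Fintype M] [DeMorganAlgebra M] [BooleanAlgebra B]
    (U : M → B) (r : M) : B :=
  ((Finset.univ.powerset.filter fun A : Finset M => A.Nonempty ∧ A.sup id = r).sup
      fun A => A.inf fun q => U q) ⊓
    ((Finset.univ.powerset.filter fun A : Finset M => A.Nonempty ∧ r < A.sup id).sup
      fun A => A.inf fun q => U q)ᶜ

section Aux

open Finset

variable {M B : Type*} [Fintype M] [DeMorganAlgebra M] [BooleanAlgebra B]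

/-- `gOp U m = Σ_{sup A = m} Π_{q∈A} U_q`. -/
noncomputable def gOp (U : M → B) (m : M) : B :=
  (Finset.univ.powerset.filter fun A : Finset M => A.Nonempty ∧ A.sup id = m).sup
      fun A => A.inf fun q => U q

lemma regroup1 (U : M → B) (P : M → Prop) :
    ((univ.powerset.filter fun A : Finset M => A.Nonempty ∧ P (A.sup id)).sup
      fun A => A.inf fun q => U q) = (univ.filter P).sup (gOp U) := by
  apply le_antisymm
  · refine Finset.sup_le fun A hA => ?_
    simp only [mem_filter, mem_powerset] at hA
    refine le_trans ?_ (Finset.le_sup (f := gOp U) (b := A.sup id)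
      (mem_filter.mpr ⟨mem_univ _, hA.2.2⟩))
    exact Finset.le_sup (f := fun A : Finset M => A.inf fun q => U q)
      (mem_filter.mpr ⟨mem_powerset.mpr (subset_univ A), hA.2.1, rfl⟩)
  · refine Finset.sup_le fun m hm => Finset.sup_le fun A hA => ?_
    simp only [mem_filter, mem_univ, true_and] at hm
    simp only [mem_filter, mem_powerset] at hA
    exact Finset.le_sup
      (mem_filter.mpr ⟨mem_powerset.mpr (subset_univ A), hA.2.1, hA.2.2 ▸ hm⟩)

lemma layerOp_eq (U : M → B) (p : M) :
    layerOp U p = gOp U p ⊓ ((univ.filter fun m : M => p < m).sup (gOp U))ᶜ := by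
  rw [layerOp]
  congr 1
  congr 1
  exact regroup1 U fun m => p < m

lemma single_le_gOp (U : M → B) (r : M) : U r ≤ gOp U r := by
  rw [gOp]
  refine le_trans (le_of_eq (Finset.inf_singleton (f := fun q => U q)).symm)
    (Finset.le_sup (mem_filter.mpr ⟨mem_powerset.mpr (subset_univ _),
      singleton_nonempty r, by simp⟩))

lemma gOp_inf_le (U : M → B) (m m' : M) : gOp U m ⊓ gOp U m' ≤ gOp U (m ⊔ m') := by
  rw [gOp, Finset.sup_inf_distrib_right]
  refine Finset.sup_le fun A hA => ?_
  rw [gOp, Finset.sup_inf_distrib_left]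
  refine Finset.sup_le fun A' hA' => ?_
  simp only [mem_filter, mem_powerset] at hA hA'
  have hmem : A ∪ A' ∈ univ.powerset.filter
      fun C : Finset M => C.Nonempty ∧ C.sup id = m ⊔ m' := by
    simp only [mem_filter, mem_powerset, subset_univ, true_and]
    obtain ⟨a, ha⟩ := hA.2.1
    exact ⟨⟨a, Finset.mem_union_left _ ha⟩, by rw [Finset.sup_union, hA.2.2, hA'.2.2]⟩
  refine le_trans (le_of_eq (Finset.inf_union (f := fun q => U q)).symm) ?_
  exact Finset.le_sup hmem

/-- Key Boolean-algebra lemma: relativizing the layer operation along `· ⊓ t`. -/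
lemma lemA (G : M → B) (hG : ∀ m m', G m ⊓ G m' ≤ G (m ⊔ m')) (t p : M) :
    (univ.filter fun m : M => m ⊓ t = p).sup G ⊓
        ((univ.filter fun m : M => p < m ⊓ t).sup G)ᶜ
      = (univ.filter fun m : M => m ⊓ t = p).sup
          fun r => G r ⊓ ((univ.filter fun m : M => r < m).sup G)ᶜ := by
  set X := (univ.filter fun m : M => p < m ⊓ t).sup G with hX
  set R := (univ.filter fun m : M => m ⊓ t = p).sup
      (fun r => G r ⊓ ((univ.filter fun m : M => r < m).sup G)ᶜ) with hR
  apply le_antisymm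
  · have key : ∀ m : M, m ⊓ t = p → G m ⊓ Xᶜ ≤ R := by
      have wf : WellFounded fun a b : M => a > b := wellFounded_gt
      refine fun m => wf.induction
        (C := fun m => m ⊓ t = p → G m ⊓ Xᶜ ≤ R) m ?_
      intro m IH hm
      set Y := (univ.filter fun m' : M => m < m').sup G with hY
      have hsplit : G m ⊓ Xᶜ = (G m ⊓ Xᶜ) ⊓ Y ⊔ (G m ⊓ Xᶜ) ⊓ Yᶜ := by
        rw [← inf_sup_left, sup_compl_eq_top, inf_top_eq]
      rw [hsplit]
      apply sup_le
      · rw [hY, Finset.sup_inf_distrib_left]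
        refine Finset.sup_le fun m' hm' => ?_
        simp only [mem_filter, mem_univ, true_and] at hm'
        have hle : p ≤ m' ⊓ t := hm ▸ inf_le_inf_right t hm'.le
        rcases eq_or_lt_of_le hle with heq | hlt
        · refine le_trans ?_ (IH m' hm' heq.symm)
          exact le_inf inf_le_right (le_trans inf_le_left inf_le_right)
        · have hx : G m' ≤ X := by
            rw [hX]
            exact Finset.le_sup (by simp only [mem_filter, mem_univ, true_and]; exact hlt)
          have h1 : (G m ⊓ Xᶜ) ⊓ G m' ≤ Xᶜ ⊓ X :=
            le_inf (le_trans inf_le_left inf_le_right) (le_trans inf_le_right hx)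
          exact le_trans h1 (le_trans (le_of_eq compl_inf_eq_bot) bot_le)
      · rw [hR]
        refine le_trans ?_ (Finset.le_sup (b := m)
          (by simp only [mem_filter, mem_univ, true_and]; exact hm))
        exact le_inf (le_trans inf_le_left inf_le_left) inf_le_right
    rw [Finset.sup_inf_distrib_right]
    refine Finset.sup_le fun m hm => ?_
    simp only [mem_filter, mem_univ, true_and] at hm
    exact key m hm
  · refine Finset.sup_le fun r hr => ?_
    simp only [mem_filter, mem_univ, true_and] at hr
    set Z := (univ.filter fun m : M => r < m).sup G with hZ
    refine le_inf (le_trans inf_le_left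
      (Finset.le_sup (by simp only [mem_filter, mem_univ, true_and]; exact hr))) ?_
    rw [le_compl_iff_disjoint_right, hX, Finset.disjoint_sup_right]
    intro m' hm'
    simp only [mem_filter, mem_univ, true_and] at hm'
    rw [disjoint_iff]
    have h1 : G r ⊓ G m' ≤ Z := by
      refine le_trans (hG r m') ?_
      rw [hZ]
      refine Finset.le_sup ?_
      simp only [mem_filter, mem_univ, true_and]
      refine lt_of_le_of_ne le_sup_left fun h => ?_
      have hmr : m' ≤ r := h ▸ le_sup_right
      exact absurd (le_trans (inf_le_inf_right t hmr) (le_of_eq hr)) (not_le_of_gt hm')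
    have h2 : (G r ⊓ Zᶜ) ⊓ G m' ≤ Z ⊓ Zᶜ :=
      le_inf (le_trans (le_inf (le_trans inf_le_left inf_le_left) inf_le_right) h1)
        (le_trans inf_le_left inf_le_right)
    refine le_antisymm (le_trans h2 (le_of_eq inf_compl_eq_bot)) bot_le

lemma regroup2 (g : M → B) (t p : M) :
    ((univ.filter fun m : M => p < m).sup
        fun p' => (univ.filter fun m : M => m ⊓ t = p').sup g)
      = (univ.filter fun m : M => p < m ⊓ t).sup g := by
  apply le_antisymm
  · refine Finset.sup_le fun p' hp' => Finset.sup_le fun m hm => ?_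
    simp only [mem_filter, mem_univ, true_and] at hp' hm
    exact Finset.le_sup (by simp only [mem_filter, mem_univ, true_and]; exact hm ▸ hp')
  · refine Finset.sup_le fun m hm => ?_
    simp only [mem_filter, mem_univ, true_and] at hm
    have houter : ((univ.filter fun m' : M => m' ⊓ t = m ⊓ t).sup g)
        ≤ ((univ.filter fun m' : M => p < m').sup
            fun p' => (univ.filter fun m' : M => m' ⊓ t = p').sup g) :=
      Finset.le_sup (f := fun p' => (univ.filter fun m' : M => m' ⊓ t = p').sup g)
        (b := m ⊓ t) (mem_filter.mpr ⟨mem_univ _, hm⟩)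
    refine le_trans ?_ houter
    exact Finset.le_sup (mem_filter.mpr ⟨mem_univ _, rfl⟩)

lemma regroupPair (F : M × M → B) (p : M) :
    (univ.filter fun rt : M × M => rt.1 ⊓ rt.2 = p).sup F
      = univ.sup fun t => (univ.filter fun r : M => r ⊓ t = p).sup fun r => F (r, t) := by
  apply le_antisymm
  · refine Finset.sup_le fun rt hrt => ?_
    simp only [mem_filter, mem_univ, true_and] at hrt
    refine le_trans ?_
      (Finset.le_sup
        (f := fun t => (univ.filter fun r : M => r ⊓ t = p).sup fun r => F (r, t))
        (mem_univ rt.2))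
    refine Finset.le_sup (f := fun r => F (r, rt.2)) (b := rt.1) ?_
    exact mem_filter.mpr ⟨mem_univ _, hrt⟩
  · refine Finset.sup_le fun t _ => Finset.sup_le fun r hr => ?_
    simp only [mem_filter, mem_univ, true_and] at hr
    exact Finset.le_sup (by simp only [mem_filter, mem_univ, true_and]; exact hr)

/-- Computation of `gOp` of the convolved family. -/
lemma L4 (U W : M → B) (hW2 : ∀ q r : M, q ≠ r → W q ⊓ W r = ⊥) (p : M) :
    gOp (fun q : M =>
        (Finset.univ.filter fun rt : M × M => rt.1 ⊓ rt.2 = q).sup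
          fun rt => U rt.1 ⊓ W rt.2) p
      = univ.sup fun t => ((univ.filter fun m : M => m ⊓ t = p).sup (gOp U)) ⊓ W t := by
  set U' : M → B := fun q : M =>
      (Finset.univ.filter fun rt : M × M => rt.1 ⊓ rt.2 = q).sup
        fun rt => U rt.1 ⊓ W rt.2 with hU'
  have main : ∀ C : Finset M, C.Nonempty → (C.inf fun q => U' q) ≤
      univ.sup fun t => ((univ.filter fun m : M => m ⊓ t = C.sup id).sup (gOp U)) ⊓ W t := by
    intro C hC
    induction hC using Finset.Nonempty.cons_induction with
    | singleton a =>
        simp only [Finset.inf_singleton, Finset.sup_singleton, id_eq]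
        rw [hU']
        refine Finset.sup_le fun rt hrt => ?_
        simp only [mem_filter, mem_univ, true_and] at hrt
        refine le_trans ?_ (Finset.le_sup (mem_univ rt.2))
        exact inf_le_inf_right _ (le_trans (single_le_gOp U rt.1)
          (Finset.le_sup (by simp only [mem_filter, mem_univ, true_and]; exact hrt)))
    | cons a C h hC ih =>
        rw [Finset.inf_cons, Finset.sup_cons, id_eq]
        refine le_trans (inf_le_inf_left _ ih) ?_
        conv_lhs => rw [hU']
        rw [Finset.sup_inf_distrib_right]
        refine Finset.sup_le fun rt hrt => ?_
        simp only [mem_filter, mem_univ, true_and] at hrt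
        rw [Finset.sup_inf_distrib_left]
        refine Finset.sup_le fun t _ => ?_
        by_cases hte : rt.2 = t
        · subst hte
          refine le_trans ?_ (Finset.le_sup (mem_univ rt.2))
          have h1 : U rt.1 ⊓ W rt.2 ⊓
                (((univ.filter fun m : M => m ⊓ rt.2 = C.sup id).sup (gOp U)) ⊓ W rt.2)
              ≤ (U rt.1 ⊓ ((univ.filter fun m : M => m ⊓ rt.2 = C.sup id).sup (gOp U)))
                  ⊓ W rt.2 :=
            le_inf (le_inf (le_trans inf_le_left inf_le_left)
              (le_trans inf_le_right inf_le_left)) (le_trans inf_le_left inf_le_right)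
          refine le_trans h1 (inf_le_inf_right _ ?_)
          rw [Finset.sup_inf_distrib_left]
          refine Finset.sup_le fun m hm => ?_
          simp only [mem_filter, mem_univ, true_and] at hm
          refine le_trans (le_trans (inf_le_inf_right _ (single_le_gOp U rt.1))
            (gOp_inf_le U rt.1 m)) (Finset.le_sup ?_)
          simp only [mem_filter, mem_univ, true_and]
          rw [inf_sup_right, hrt, hm]
        · have h1 : U rt.1 ⊓ W rt.2 ⊓
                (((univ.filter fun m : M => m ⊓ t = C.sup id).sup (gOp U)) ⊓ W t)
              ≤ W rt.2 ⊓ W t :=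
            le_inf (le_trans inf_le_left inf_le_right) (le_trans inf_le_right inf_le_right)
          rw [hW2 _ _ hte] at h1
          exact le_trans h1 bot_le
  apply le_antisymm
  · conv_lhs => rw [gOp]
    refine Finset.sup_le fun A hA => ?_
    simp only [mem_filter, mem_powerset] at hA
    exact hA.2.2 ▸ main A hA.2.1
  · refine Finset.sup_le fun t _ => ?_
    rw [Finset.sup_inf_distrib_right]
    refine Finset.sup_le fun m hm => ?_
    simp only [mem_filter, mem_univ, true_and] at hm
    conv_lhs => rw [gOp]
    rw [Finset.sup_inf_distrib_right]
    refine Finset.sup_le fun D hD => ?_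
    simp only [mem_filter, mem_powerset] at hD
    refine le_trans ?_ (Finset.le_sup (f := fun A : Finset M => A.inf fun q => U' q)
      (b := D.image fun d => d ⊓ t) ?_)
    · refine Finset.le_inf fun q hq => ?_
      obtain ⟨d, hd, hdq⟩ := Finset.mem_image.mp hq
      refine le_trans (inf_le_inf_right _ (Finset.inf_le hd)) ?_
      rw [hU']
      exact Finset.le_sup (f := fun rt : M × M => U rt.1 ⊓ W rt.2) (b := (d, t))
        (by simp only [mem_filter, mem_univ, true_and]; exact hdq)
    · simp only [mem_filter, mem_powerset, subset_univ, true_and]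
      refine ⟨hD.2.1.image _, ?_⟩
      rw [Finset.sup_image]
      have : ((id : M → M) ∘ fun d : M => d ⊓ t) = fun d : M => id d ⊓ t := rfl
      rw [this, ← Finset.sup_inf_distrib_right, hD.2.2, hm]

/-- Partition lemma for complements. -/
lemma L5 (W : M → B) (hW1 : Finset.univ.sup W = ⊤)
    (hW2 : ∀ q r : M, q ≠ r → W q ⊓ W r = ⊥) (x y : M → B) :
    (univ.sup fun t => x t ⊓ W t) ⊓ (univ.sup fun t => y t ⊓ W t)ᶜ
      = univ.sup fun t => (x t ⊓ (y t)ᶜ) ⊓ W t := by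
  apply le_antisymm
  · have hstart : (univ.sup fun t => x t ⊓ W t) ⊓ (univ.sup fun t => y t ⊓ W t)ᶜ
        = ((univ.sup fun t => x t ⊓ W t) ⊓ (univ.sup fun t => y t ⊓ W t)ᶜ) ⊓ univ.sup W := by
      rw [hW1, inf_top_eq]
    rw [hstart, Finset.sup_inf_distrib_left]
    refine Finset.sup_le fun t _ => ?_
    refine le_trans ?_ (Finset.le_sup (mem_univ t))
    refine le_inf (le_inf ?_ ?_) inf_le_right
    · have h0 : (univ.sup fun s => x s ⊓ W s) ⊓ W t ≤ x t := by
        rw [Finset.sup_inf_distrib_right]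
        refine Finset.sup_le fun s _ => ?_
        by_cases hst : s = t
        · subst hst; exact le_trans inf_le_left inf_le_left
        · have h1 : x s ⊓ W s ⊓ W t ≤ W s ⊓ W t :=
            le_inf (le_trans inf_le_left inf_le_right) inf_le_right
          rw [hW2 _ _ hst] at h1
          exact le_trans h1 bot_le
      exact le_trans (inf_le_inf_right _ inf_le_left) h0
    · have h0 : (univ.sup fun s => y s ⊓ W s)ᶜ ⊓ W t ≤ (y t)ᶜ := by
        have h1 : (univ.sup fun s => y s ⊓ W s)ᶜ ≤ (y t ⊓ W t)ᶜ :=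
          compl_le_compl (Finset.le_sup (f := fun s => y s ⊓ W s) (mem_univ t))
        refine le_trans (inf_le_inf_right _ h1) ?_
        have h2 : (y t ⊓ W t)ᶜ ⊓ W t = (y t)ᶜ ⊓ W t ⊔ (W t)ᶜ ⊓ W t := by
          rw [compl_inf, inf_sup_right]
        rw [h2]
        exact sup_le inf_le_left (le_trans (le_of_eq compl_inf_eq_bot) bot_le)
      exact le_trans (inf_le_inf_right _ inf_le_right) h0
  · refine Finset.sup_le fun t _ => le_inf ?_ ?_
    · exact le_trans (inf_le_inf_right _ inf_le_left)
        (Finset.le_sup (f := fun t => x t ⊓ W t) (mem_univ t))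
    · rw [le_compl_iff_disjoint_right, Finset.disjoint_sup_right]
      intro s _
      rw [disjoint_iff]
      refine le_antisymm ?_ bot_le
      by_cases hst : s = t
      · subst hst
        have h1 : (x s ⊓ (y s)ᶜ) ⊓ W s ⊓ (y s ⊓ W s) ≤ (y s)ᶜ ⊓ y s :=
          le_inf (le_trans inf_le_left (le_trans inf_le_left inf_le_right))
            (le_trans inf_le_right inf_le_left)
        exact le_trans h1 (le_of_eq compl_inf_eq_bot)
      · have h1 : (x t ⊓ (y t)ᶜ) ⊓ W t ⊓ (y s ⊓ W s) ≤ W t ⊓ W s :=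
          le_inf (le_trans inf_le_left inf_le_right) (le_trans inf_le_right inf_le_right)
        exact le_trans h1 (le_of_eq (hW2 _ _ (fun hh => hst hh.symm)))

end Aux

/-- First Boolean identity (Theorem 2.9 of the paper). -/
theorem stmt_7 {M B : Type*} [Fintype M] [DeMorganAlgebra M] [BooleanAlgebra B]
    (U W : M → B)
    (hW1 : Finset.univ.sup W = ⊤) (hW2 : ∀ q r : M, q ≠ r → W q ⊓ W r = ⊥) :
    ∀ p : M,
      layerOp (fun q : M =>
          (Finset.univ.filter fun rt : M × M => rt.1 ⊓ rt.2 = q).sup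
            fun rt => U rt.1 ⊓ W rt.2) p =
        (Finset.univ.filter fun rt : M × M => rt.1 ⊓ rt.2 = p).sup
          fun rt => layerOp U rt.1 ⊓ W rt.2 := by
  intro p
  open Finset in
  rw [layerOp_eq]
  have hGT : ((univ.filter fun m : M => p < m).sup
        (gOp (fun q : M =>
          (Finset.univ.filter fun rt : M × M => rt.1 ⊓ rt.2 = q).sup
            fun rt => U rt.1 ⊓ W rt.2)))
      = univ.sup fun t =>
          ((univ.filter fun m : M => p < m ⊓ t).sup (gOp U)) ⊓ W t := by
    calc ((univ.filter fun m : M => p < m).sup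
            (gOp (fun q : M =>
              (Finset.univ.filter fun rt : M × M => rt.1 ⊓ rt.2 = q).sup
                fun rt => U rt.1 ⊓ W rt.2)))
        = (univ.filter fun m : M => p < m).sup fun p' =>
            univ.sup fun t => ((univ.filter fun m : M => m ⊓ t = p').sup (gOp U)) ⊓ W t :=
          Finset.sup_congr rfl fun p' _ => L4 U W hW2 p'
      _ = univ.sup fun t => (univ.filter fun m : M => p < m).sup fun p' =>
            ((univ.filter fun m : M => m ⊓ t = p').sup (gOp U)) ⊓ W t :=
          Finset.sup_comm _ _ _
      _ = univ.sup fun t => ((univ.filter fun m : M => p < m).sup fun p' =>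
            (univ.filter fun m : M => m ⊓ t = p').sup (gOp U)) ⊓ W t :=
          Finset.sup_congr rfl fun t _ => (Finset.sup_inf_distrib_right _ _ _).symm
      _ = univ.sup fun t => ((univ.filter fun m : M => p < m ⊓ t).sup (gOp U)) ⊓ W t :=
          Finset.sup_congr rfl fun t _ => by rw [regroup2]
  rw [L4 U W hW2 p, hGT,
    L5 W hW1 hW2 (fun t => (univ.filter fun m : M => m ⊓ t = p).sup (gOp U))
      (fun t => (univ.filter fun m : M => p < m ⊓ t).sup (gOp U)),
    regroupPair (fun rt : M × M => layerOp U rt.1 ⊓ W rt.2) p]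
  refine Finset.sup_congr rfl fun t _ => ?_
  show ((univ.filter fun m : M => m ⊓ t = p).sup (gOp U) ⊓
        ((univ.filter fun m : M => p < m ⊓ t).sup (gOp U))ᶜ) ⊓ W t
      = (univ.filter fun r : M => r ⊓ t = p).sup fun r => layerOp U r ⊓ W t
  rw [lemA (gOp U) (gOp_inf_le U) t p, Finset.sup_inf_distrib_right]
  refine Finset.sup_congr rfl fun r _ => ?_
  rw [layerOp_eq U r]
end

section
/- In an M-cylindric algebra, a + a = a for all a. -/
attribute [local instance] Classical.propDecidable

/-- An `M`-cylindric algebra (the fragment of the axioms relevant here):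
Boolean axioms 1–5 together with axioms 23, 25 and 30 of the paper.
Here `u ⊥` is `u_0` and `u ⊤` is `u_1`. -/
structure MCA (M : Type*) [Fintype M] [DeMorganAlgebra M] (A : Type*) where
  add : A → A → A
  mul : A → A → A
  neg : A → A
  u : M → A
  delta : M → A → A
  add_comm : ∀ a b, add a b = add b a
  mul_comm : ∀ a b, mul a b = mul b a
  add_assoc : ∀ a b c, add (add a b) c = add a (add b c)
  mul_assoc : ∀ a b c, mul (mul a b) c = mul a (mul b c)
  mul_add : ∀ a b c, mul a (add b c) = add (mul a b) (mul a c)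
  add_mul : ∀ a b c, add a (mul b c) = mul (add a b) (add a c)
  add_u0 : ∀ a, add a (u ⊥) = a
  mul_u1 : ∀ a, mul a (u ⊤) = a
  delta_compl_add : ∀ (p : M) (a : A), add (delta p a) (neg (delta p a)) = u ⊤
  delta_compl_mul : ∀ (p : M) (a : A), mul (delta p a) (neg (delta p a)) = u ⊥
  ax23 : ∀ (p q : M) (a : A), p ≠ q → mul (delta p a) (delta q a) = u ⊥
  ax25 : ∀ (p : M) (a b : A),
    delta p (add a b) =
      haveI : Std.Commutative add := ⟨add_comm⟩
      haveI : Std.Associative add := ⟨add_assoc⟩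
      (Finset.univ.filter fun qr : M × M => qr.1 ⊔ qr.2 = p).fold add (u ⊥)
        (fun qr => mul (delta qr.1 a) (delta qr.2 b))
  ax30 : ∀ a b : A, (∀ p : M, delta p a = delta p b) → a = b

namespace MCA

variable {M A : Type*} [Fintype M] [DeMorganAlgebra M] (S : MCA M A)

instance : Std.Commutative S.add := ⟨S.add_comm⟩

instance : Std.Associative S.add := ⟨S.add_assoc⟩

theorem fold_add_eq_single {ι : Type*} [DecidableEq ι] {s : Finset ι} {f : ι → A}
    {i : ι} (hi : i ∈ s) (hf : ∀ j ∈ s, j ≠ i → f j = S.u ⊥) :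
    s.fold S.add (S.u ⊥) f = f i := by
  have hzero : ∀ t : Finset ι, (∀ j ∈ t, f j = S.u ⊥) → t.fold S.add (S.u ⊥) f = S.u ⊥ := by
    intro t ht
    induction t using Finset.induction with
    | empty => rfl
    | insert j t hj ih =>
      rw [Finset.fold_insert hj, ht j (t.mem_insert_self j),
        ih fun k hk => ht k (Finset.mem_insert_of_mem hk), S.add_u0]
  rw [← Finset.insert_erase hi, Finset.fold_insert (s.notMem_erase i),
    hzero _ fun j hj => hf j (Finset.mem_of_mem_erase hj) (Finset.ne_of_mem_erase hj), S.add_u0]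

theorem mul_delta_self (p : M) (a : A) : S.mul (S.delta p a) (S.delta p a) = S.delta p a :=
  calc S.mul (S.delta p a) (S.delta p a)
      = S.add (S.mul (S.delta p a) (S.delta p a)) (S.mul (S.delta p a) (S.neg (S.delta p a))) := by
        rw [S.delta_compl_mul, S.add_u0]
    _ = S.mul (S.delta p a) (S.u ⊤) := by rw [← S.mul_add, S.delta_compl_add]
    _ = S.delta p a := S.mul_u1 _

/-- Only the pair `(p, p)` contributes to axiom 25 for `δ_p (a + a)`: any other pair `(q, r)`
with `q ⊔ r = p` has `q ≠ r`, so its summand vanishes by axiom 23. -/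
theorem delta_add_self (p : M) (a : A) : S.delta p (S.add a a) = S.delta p a := by
  rw [S.ax25, S.fold_add_eq_single (i := (p, p)) (by simp), S.mul_delta_self]
  rintro ⟨q, r⟩ hqr hne
  obtain rfl : q ⊔ r = p := (Finset.mem_filter.mp hqr).2
  refine S.ax23 q r a fun hqr_diag => hne ?_
  subst hqr_diag
  rw [sup_idem]

end MCA

/-- In an M-cylindric algebra, a + a = a. -/
theorem stmt_9 {M A : Type*} [Fintype M] [DeMorganAlgebra M] (S : MCA M A) :
    ∀ a : A, S.add a a = a :=
  fun a => S.ax30 _ _ fun p => S.delta_add_self p a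
end

section
/- Let B be a Boolean algebra (or cylindric algebra) and M a finite De Morgan algebra. In the algebra M(B) whose elements are partitions of unity x : M → B (x_p · x_q = 0 for p ≠ q, Σ_p x_p = 1), with (x ⊞ y)_p = Σ_{q+r=p} x_q · y_r, the following holds: x ⊞ y = y if and only if y_p ≤ Σ_{q ≤ p} x_q for all p ∈ M. -/
attribute [local instance] Classical.propDecidable

/-- In M(B): `x ⊞ y = y` iff `y_p ≤ Σ_{q ≤ p} x_q` for all `p`. -/
theorem stmt_11 {M B : Type*} [Fintype M] [DeMorganAlgebra M] [BooleanAlgebra B]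
    (x y : M → B)
    (hx1 : ∀ p q : M, p ≠ q → x p ⊓ x q = ⊥) (hx2 : Finset.univ.sup x = ⊤)
    (hy1 : ∀ p q : M, p ≠ q → y p ⊓ y q = ⊥) (hy2 : Finset.univ.sup y = ⊤) :
    (∀ p : M,
        ((Finset.univ.filter fun qr : M × M => qr.1 ⊔ qr.2 = p).sup
          fun qr => x qr.1 ⊓ y qr.2) = y p) ↔
      ∀ p : M, y p ≤ (Finset.univ.filter fun q : M => q ≤ p).sup x := by
  constructor
  · intro h p
    rw [← h p]
    refine Finset.sup_le fun qr hqr => ?_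
    simp only [Finset.mem_filter, Finset.mem_univ, true_and] at hqr
    refine le_trans inf_le_left (Finset.le_sup ?_)
    simp only [Finset.mem_filter, Finset.mem_univ, true_and]
    exact hqr ▸ le_sup_left
  · intro h p
    apply le_antisymm
    · refine Finset.sup_le fun qr hqr => ?_
      simp only [Finset.mem_filter, Finset.mem_univ, true_and] at hqr
      by_cases hr : qr.2 = p
      · exact hr ▸ inf_le_right
      · have hbot : x qr.1 ⊓ y qr.2 ≤ ⊥ := by
          calc x qr.1 ⊓ y qr.2
              ≤ x qr.1 ⊓ (Finset.univ.filter fun q : M => q ≤ qr.2).sup x :=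
                inf_le_inf_left _ (h _)
            _ = (Finset.univ.filter fun q : M => q ≤ qr.2).sup fun s => x qr.1 ⊓ x s :=
                Finset.sup_inf_distrib_left _ _ _
            _ ≤ ⊥ := Finset.sup_le fun s hs => by
                simp only [Finset.mem_filter, Finset.mem_univ, true_and] at hs
                have hsq : qr.1 ≠ s := by
                  intro e
                  exact hr (by rw [← hqr, e, sup_eq_right.2 hs])
                exact (hx1 _ _ hsq).le
        exact hbot.trans bot_le
    · have hy : y p = Finset.univ.sup fun q => y p ⊓ x q := by
        rw [← Finset.sup_inf_distrib_left, hx2, inf_top_eq]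
      rw [hy]
      refine Finset.sup_le fun q _ => ?_
      by_cases hq : q ≤ p
      · refine le_trans (le_of_eq (inf_comm _ _)) (Finset.le_sup (f := fun qr : M × M => x qr.1 ⊓ y qr.2) (b := (q, p)) ?_)
        simp only [Finset.mem_filter, Finset.mem_univ, true_and]
        exact sup_eq_right.2 hq
      · have hbot : y p ⊓ x q ≤ ⊥ := by
          calc y p ⊓ x q
              ≤ ((Finset.univ.filter fun s : M => s ≤ p).sup x) ⊓ x q :=
                inf_le_inf_right _ (h p)
            _ = (Finset.univ.filter fun s : M => s ≤ p).sup fun s => x s ⊓ x q :=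
                Finset.sup_inf_distrib_right _ _ _
            _ ≤ ⊥ := Finset.sup_le fun s hs => by
                simp only [Finset.mem_filter, Finset.mem_univ, true_and] at hs
                have : s ≠ q := fun e => hq (e ▸ hs)
                exact (hx1 _ _ this).le
        exact hbot.trans bot_le
end

section
/- Let U be a nonempty set, M a finite De Morgan algebra, and L, K : M → P(U^α) both partitioning U^α. Define (E_κ L)_p = ⋃_{j : U → M, sup(range j) = p} ⋂_{x∈U} x∘_κ L_{j(x)} and (L ⊔ K)_p = ⋃_{q+r=p} L_q ∩ K_r. Then E_κ(L ⊔ K) = E_κ L ⊔ E_κ K. -/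
attribute [local instance] Classical.propDecidable

/-- The join in `M` of the (finite) range of `j : U → M`. -/
noncomputable def supRange {U M : Type*} [Finite M] [DeMorganAlgebra M] (j : U → M) : M :=
  (Set.toFinite (Set.range j)).toFinset.sup id

/-- `(E_κ L)_p = ⋃_{j : U → M, sup(range j) = p} ⋂_{x∈U} x ∘_κ L_{j(x)}`. -/
noncomputable def Eop {M U α : Type*} [Finite M] [DeMorganAlgebra M] [DecidableEq α]
    (κ : α) (L : M → Set (α → U)) (p : M) : Set (α → U) :=
  ⋃ (j : U → M) (_ : supRange j = p),
    ⋂ x : U, {s : α → U | Function.update s κ x ∈ L (j x)}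

/-- `(L ⊔ K)_p = ⋃_{q+r=p} L_q ∩ K_r`. -/
def bjoin {M U α : Type*} [DeMorganAlgebra M]
    (L K : M → Set (α → U)) (p : M) : Set (α → U) :=
  ⋃ (qr : M × M) (_ : qr.1 ⊔ qr.2 = p), L qr.1 ∩ K qr.2


lemma supRange_le_iff {U M : Type*} [Finite M] [DeMorganAlgebra M] (j : U → M) (p : M) :
    supRange j ≤ p ↔ ∀ x, j x ≤ p := by
  unfold supRange
  rw [Finset.sup_le_iff]
  constructor
  · intro h x
    exact h (j x) (by simp [Set.Finite.mem_toFinset])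
  · rintro h a ha
    rw [Set.Finite.mem_toFinset] at ha
    obtain ⟨x, rfl⟩ := ha
    exact h x

lemma le_supRange {U M : Type*} [Finite M] [DeMorganAlgebra M] (j : U → M) (x : U) :
    j x ≤ supRange j :=
  Finset.le_sup (f := id) (by simp [Set.Finite.mem_toFinset])

lemma supRange_sup {U M : Type*} [Finite M] [DeMorganAlgebra M] (f g : U → M) :
    supRange (fun x => f x ⊔ g x) = supRange f ⊔ supRange g := by
  apply le_antisymm
  · exact (supRange_le_iff _ _).2 fun x =>
      sup_le_sup (le_supRange f x) (le_supRange g x)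
  · exact sup_le
      ((supRange_le_iff _ _).2 fun x => le_sup_left.trans (le_supRange (fun x => f x ⊔ g x) x))
      ((supRange_le_iff _ _).2 fun x => le_sup_right.trans (le_supRange (fun x => f x ⊔ g x) x))

lemma mem_bjoin_iff {M U α : Type*} [DeMorganAlgebra M]
    (L K : M → Set (α → U)) (p : M) (s : α → U) :
    s ∈ bjoin L K p ↔ ∃ q r : M, q ⊔ r = p ∧ s ∈ L q ∧ s ∈ K r := by
  simp only [bjoin, Set.mem_iUnion, Set.mem_inter_iff, Prod.exists]
  constructor
  · rintro ⟨q, r, h, h1, h2⟩; exact ⟨q, r, h, h1, h2⟩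
  · rintro ⟨q, r, h, h1, h2⟩; exact ⟨q, r, h, h1, h2⟩

lemma mem_Eop_iff {M U α : Type*} [Finite M] [DeMorganAlgebra M] [DecidableEq α]
    (κ : α) (L : M → Set (α → U)) (p : M) (s : α → U) :
    s ∈ Eop κ L p ↔ ∃ j : U → M, supRange j = p ∧
      ∀ x : U, Function.update s κ x ∈ L (j x) := by
  simp only [Eop, Set.mem_iUnion, Set.mem_iInter, Set.mem_setOf_eq]
  constructor
  · rintro ⟨j, h, h'⟩; exact ⟨j, h, h'⟩
  · rintro ⟨j, h, h'⟩; exact ⟨j, h, h'⟩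

/-- `E_κ(L ⊔ K) = E_κ L ⊔ E_κ K`. -/
theorem stmt_17 {M U α : Type*} [Fintype M] [DeMorganAlgebra M] [Nonempty U]
    [DecidableEq α] (κ : α) (L K : M → Set (α → U))
    (hLdisj : ∀ p q : M, p ≠ q → L p ∩ L q = ∅)
    (hLcover : (⋃ p : M, L p) = Set.univ)
    (hKdisj : ∀ p q : M, p ≠ q → K p ∩ K q = ∅)
    (hKcover : (⋃ p : M, K p) = Set.univ) :
    Eop κ (bjoin L K) = bjoin (Eop κ L) (Eop κ K) := by
  funext p
  ext s
  rw [mem_Eop_iff, mem_bjoin_iff]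
  constructor
  · rintro ⟨j, hj, hs⟩
    have h : ∀ x : U, ∃ q r : M, q ⊔ r = j x ∧
        Function.update s κ x ∈ L q ∧ Function.update s κ x ∈ K r := by
      intro x
      exact (mem_bjoin_iff L K (j x) _).1 (hs x)
    choose jL jK hsup hL hK using h
    refine ⟨supRange jL, supRange jK, ?_, ?_, ?_⟩
    · rw [← supRange_sup, ← hj]
      congr 1
      funext x
      exact hsup x
    · exact (mem_Eop_iff κ L _ s).2 ⟨jL, rfl, hL⟩
    · exact (mem_Eop_iff κ K _ s).2 ⟨jK, rfl, hK⟩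
  · rintro ⟨q, r, hqr, hq, hr⟩
    obtain ⟨jL, hjL, hL⟩ := (mem_Eop_iff κ L q s).1 hq
    obtain ⟨jK, hjK, hK⟩ := (mem_Eop_iff κ K r s).1 hr
    refine ⟨fun x => jL x ⊔ jK x, by rw [supRange_sup, hjL, hjK, hqr], fun x => ?_⟩
    exact (mem_bjoin_iff L K _ _).2 ⟨jL x, jK x, rfl, hL x, hK x⟩
end

section
/- In the truth-value semantics over a finite De Morgan algebra M extended with operations δ_p (δ_p q = 1 if p = q, else 0): for all formulas θ, φ and valuations v, the truth value T(θ ⇒ φ, v) of θ ⇒ φ := ⋀_{r∈M}(γ_r φ → ⋁_{q ≤ r} γ_q θ) equals 1 if T(θ,v) ≤ T(φ,v) and equals 0 otherwise, where → is material implication ¬a ∨ b computed in M, γ_p is interpreted by δ_p, ⋀ and ⋁ are finite meets and joins over M, and ≤ is the order of M. -/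
attribute [local instance] Classical.propDecidable

/-- `δ_p q = 1` if `q = p`, else `0`. -/
noncomputable def dlt {M : Type*} [DeMorganAlgebra M] (p q : M) : M :=
  if q = p then ⊤ else ⊥

/-- `T(θ ⇒ φ, v) = Π_{r∈M}(−δ_r(b) + Σ_{q≤r} δ_q(a))` is `1` if `a ≤ b`
and `0` otherwise. -/
theorem stmt_18 {M : Type*} [Fintype M] [DeMorganAlgebra M] :
    ∀ a b : M,
      (Finset.univ.inf fun r : M =>
          DeMorganAlgebra.dneg (dlt r b) ⊔
            (Finset.univ.filter fun q : M => q ≤ r).sup fun q => dlt q a) =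
        if a ≤ b then ⊤ else ⊥ := by
  intro a b
  have hbot : DeMorganAlgebra.dneg (⊥ : M) = ⊤ := by
    have h := DeMorganAlgebra.dneg_sup (DeMorganAlgebra.dneg (⊤ : M)) ⊥
    have h2 := DeMorganAlgebra.dneg_dneg (⊤ : M)
    simpa [h2] using h.symm
  have htop : DeMorganAlgebra.dneg (⊤ : M) = ⊥ := by
    have h := DeMorganAlgebra.dneg_inf (DeMorganAlgebra.dneg (⊥ : M)) ⊤
    have h2 := DeMorganAlgebra.dneg_dneg (⊥ : M)
    simpa [h2] using h.symm
  split_ifs with hab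
  · rw [eq_top_iff]
    apply le_trans le_top
    refine Finset.le_inf fun r _ => ?_
    by_cases hbr : b = r
    · have ha : a ∈ Finset.univ.filter fun q : M => q ≤ r := by
        simp [hbr ▸ hab]
      have : dlt a a ≤ (Finset.univ.filter fun q : M => q ≤ r).sup
          fun q => dlt q a := Finset.le_sup (f := fun q => dlt q a) ha
      simp only [dlt, if_pos rfl] at this
      exact le_trans (le_trans this le_sup_right) le_rfl
    · have : dlt r b = ⊥ := by simp [dlt, hbr]
      rw [this, hbot]
      exact le_sup_left.trans' le_top
  · rw [eq_bot_iff]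
    refine le_trans (Finset.inf_le (Finset.mem_univ b)) ?_
    have hs : ((Finset.univ.filter fun q : M => q ≤ b).sup
        fun q => dlt q a) = ⊥ := by
      refine (Finset.sup_eq_bot_iff _ _).mpr fun q hq => ?_
      have hq' : q ≤ b := (Finset.mem_filter.mp hq).2
      have : a ≠ q := fun h => hab (h ▸ hq')
      simp [dlt, this]
    rw [show dlt b b = ⊤ from if_pos rfl, htop, hs]
    simp
end

section
/- Let M be a finite De Morgan algebra with operations δ_p (δ_p q = 1 if p = q, else 0). Define for a, b ∈ M: Imp(a,b) = Π_{r∈M}(−δ_r(b) + Σ_{q≤r} δ_q(a)) and Iff(a,b) = Imp(a,b) · Imp(b,a). Then Iff(a,b) = 1 if a = b, and Iff(a,b) = 0 if a ≠ b; in particular Iff(a,b) ∈ {0,1} always. -/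
attribute [local instance] Classical.propDecidable

/-- `Imp(a,b) = Π_{r∈M}(−δ_r(b) + Σ_{q≤r} δ_q(a))`. -/
noncomputable def Imp {M : Type*} [Fintype M] [DeMorganAlgebra M] (a b : M) : M :=
  Finset.univ.inf fun r : M =>
    DeMorganAlgebra.dneg (dlt r b) ⊔
      (Finset.univ.filter fun q : M => q ≤ r).sup fun q => dlt q a

/-- `Iff(a,b) = Imp(a,b) · Imp(b,a)`. -/
noncomputable def Iffv {M : Type*} [Fintype M] [DeMorganAlgebra M] (a b : M) : M :=
  Imp a b ⊓ Imp b a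
lemma dneg_top {M : Type*} [DeMorganAlgebra M] : DeMorganAlgebra.dneg (⊤ : M) = ⊥ := by
  have h : DeMorganAlgebra.dneg ((⊤ : M) ⊔ DeMorganAlgebra.dneg ⊥) = DeMorganAlgebra.dneg (⊤ : M) := by
    rw [top_sup_eq]
  rw [DeMorganAlgebra.dneg_sup, DeMorganAlgebra.dneg_dneg, inf_bot_eq] at h
  exact h.symm

lemma dneg_bot {M : Type*} [DeMorganAlgebra M] : DeMorganAlgebra.dneg (⊥ : M) = ⊤ := by
  have h : DeMorganAlgebra.dneg ((⊥ : M) ⊓ DeMorganAlgebra.dneg ⊤) = DeMorganAlgebra.dneg (⊥ : M) := by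
    rw [bot_inf_eq]
  rw [DeMorganAlgebra.dneg_inf, DeMorganAlgebra.dneg_dneg, sup_top_eq] at h
  exact h.symm

lemma imp_eq {M : Type*} [Fintype M] [DeMorganAlgebra M] (a b : M) :
    Imp a b = if a ≤ b then ⊤ else ⊥ := by
  unfold Imp
  split_ifs with h
  · rw [Finset.inf_eq_top_iff]
    intro r _
    by_cases hr : b = r
    · have : dlt r b = ⊤ := by simp [dlt, hr]
      rw [this, dneg_top, bot_sup_eq]
      refine le_antisymm le_top ?_
      have ha : a ∈ Finset.univ.filter fun q : M => q ≤ r := by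
        simp [hr ▸ h]
      calc (⊤ : M) = dlt a a := by simp [dlt]
        _ ≤ _ := Finset.le_sup (f := fun q => dlt q a) ha
    · have : dlt r b = ⊥ := by simp [dlt, hr]
      rw [this, dneg_bot, top_sup_eq]
  · refine le_bot_iff.mp (le_trans (Finset.inf_le (Finset.mem_univ b)) ?_)
    have : dlt b b = ⊤ := by simp [dlt]
    rw [this, dneg_top, bot_sup_eq]
    apply Finset.sup_le
    intro q hq
    have hqb : q ≤ b := (Finset.mem_filter.mp hq).2
    have : dlt q a = ⊥ := by
      simp only [dlt]
      split_ifs with haq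
      · exact absurd (haq ▸ hqb) h
      · rfl
    simp [this]

/-- `Iff(a,b)` is `1` if `a = b`, `0` if `a ≠ b`; in particular it is
always in `{0,1}`. -/
theorem stmt_19 {M : Type*} [Fintype M] [DeMorganAlgebra M] (a b : M) :
    (a = b → Iffv a b = ⊤) ∧ (a ≠ b → Iffv a b = ⊥) ∧
      (Iffv a b = ⊥ ∨ Iffv a b = ⊤) := by
  have key : ∀ h : a ≠ b, Iffv a b = ⊥ := by
    intro h
    unfold Iffv
    rcases (not_and_or.mp fun hle => h (le_antisymm hle.1 hle.2)) with h1 | h1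
    · rw [imp_eq, if_neg h1, bot_inf_eq]
    · rw [imp_eq b a, if_neg h1, inf_bot_eq]
  have key2 : a = b → Iffv a b = ⊤ := by
    intro h
    subst h
    unfold Iffv
    rw [imp_eq, if_pos le_rfl, top_inf_eq]
  refine ⟨key2, key, ?_⟩
  by_cases h : a = b
  · exact Or.inr (key2 h)
  · exact Or.inl (key h)
end
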